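/- arXiv:2401.10927 — 5 statements merged into one kernel-verified Lean document; each statement's English description precedes it below -/
import Mathlib

section
/- For every n×n real matrix Z with all entries in [−1,1] (in particular for every Z ∈ M_opt), ⟨R, Z* − Z⟩ ≥ pγ·w_min²·‖Z − Z*‖₁, where Z* = u₂u₂ᵀ. -/
open Matrix Finset

noncomputable section

def opNorm {k l : ℕ} (A : Matrix (Fin k) (Fin l) ℝ) : ℝ :=
  ‖(Matrix.toEuclideanLin A).toContinuousLinearMap‖

def ip {n : ℕ} (A B : Matrix (Fin n) (Fin n) ℝ) : ℝ := Matrix.trace (Aᵀ * B)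

def ell1Norm {k l : ℕ} (M : Matrix (Fin k) (Fin l) ℝ) : ℝ := ∑ i, ∑ j, |M i j|

def frobNorm {k l : ℕ} (M : Matrix (Fin k) (Fin l) ℝ) : ℝ :=
  Real.sqrt (∑ i, ∑ j, (M i j) ^ 2)

def euclNorm {k : ℕ} (x : Fin k → ℝ) : ℝ := Real.sqrt (∑ i, x i ^ 2)

def En (n : ℕ) : Matrix (Fin n) (Fin n) ℝ := Matrix.of fun _ _ => 1

def centering (n : ℕ) : Matrix (Fin n) (Fin n) ℝ := 1 - ((n : ℝ)⁻¹) • En n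

def Mopt (n : ℕ) : Set (Matrix (Fin n) (Fin n) ℝ) :=
  {Z | Z.PosSemidef ∧ ∀ i, Z i i = 1}

def MGplus (n : ℕ) : Set (Matrix (Fin n) (Fin n) ℝ) :=
  {Z | Z.PosSemidef ∧ ∀ i, Z i i ≤ 1}

def MoptPlus (n : ℕ) : Set (Matrix (Fin n) (Fin n) ℝ) :=
  {Z | Z.PosSemidef ∧ (∀ i, Z i i = 1) ∧ ip (En n) Z = 0}

def u2 (n n₁ : ℕ) : Fin n → ℝ := fun j => if (j : ℕ) < n₁ then 1 else -1

def Zstar (n n₁ : ℕ) : Matrix (Fin n) (Fin n) ℝ :=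
  Matrix.vecMulVec (u2 n n₁) (u2 n n₁)

def wmin (n n₁ n₂ : ℕ) : ℝ := min ((n₁ : ℝ) / n) ((n₂ : ℝ) / n)

def vref (n n₁ n₂ : ℕ) : Fin n → ℝ :=
  fun j => if (j : ℕ) < n₁ then (n₂ : ℝ) / n else -((n₁ : ℝ) / n)

def Rmat (n n₁ n₂ p : ℕ) (γ : ℝ) : Matrix (Fin n) (Fin n) ℝ :=
  ((p : ℝ) * γ) • Matrix.vecMulVec (vref n n₁ n₂) (vref n n₁ n₂)

/-!
The bound holds entry by entry. Write `v = |v| ⊙ u₂`, so that `R_ij = pγ |v_i| |v_j| Z*_ij`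
with `|v_j| ≥ w_min`. Since `Z*_ij = ±1` and `|Z_ij| ≤ 1`, we get
`Z*_ij (Z*_ij - Z_ij) = |Z*_ij - Z_ij|`, hence `R_ij (Z*_ij - Z_ij) ≥ pγ w_min² |Z*_ij - Z_ij|`.
Matrices in `M_opt` have entries in `[-1, 1]` because `2 |Z_ij| ≤ Z_ii + Z_jj` for positive
semidefinite `Z`, by testing the quadratic form at `e_i ± e_j`.
-/

theorem Matrix.PosSemidef.two_mul_abs_apply_le {ι : Type*} [Fintype ι] {A : Matrix ι ι ℝ}
    (hA : A.PosSemidef) (i j : ι) : 2 * |A i j| ≤ A i i + A j j := by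
  classical
  have hsymm : A j i = A i j := hA.1.apply i j
  have hquad : ∀ s : ℝ, 0 ≤ A i i + 2 * s * A i j + s * s * A j j := fun s => by
    have h := hA.dotProduct_mulVec_nonneg (Pi.single i 1 + s • Pi.single j 1)
    simp only [star_trivial, mulVec_add, mulVec_smul, dotProduct_add, add_dotProduct,
      dotProduct_smul, smul_dotProduct, mulVec_single_one, single_one_dotProduct, col_apply,
      smul_eq_mul, hsymm] at h
    linarith
  rcases abs_cases (A i j) with ⟨h, _⟩ | ⟨h, _⟩ <;> rw [h] <;> linarith [hquad 1, hquad (-1)]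

lemma abs_apply_le_one_of_mem_Mopt {n : ℕ} {Z : Matrix (Fin n) (Fin n) ℝ} (hZ : Z ∈ Mopt n)
    (i j : Fin n) : |Z i j| ≤ 1 := by
  have := hZ.1.two_mul_abs_apply_le i j
  rw [hZ.2 i, hZ.2 j] at this
  linarith

lemma ip_eq_sum_mul_apply {n : ℕ} (A B : Matrix (Fin n) (Fin n) ℝ) :
    ip A B = ∑ i, ∑ j, A i j * B i j := by
  rw [ip, trace, sum_comm]
  simp only [diag_apply, mul_apply, transpose_apply]

lemma ell1Norm_sub_comm {k l : ℕ} (A B : Matrix (Fin k) (Fin l) ℝ) :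
    ell1Norm (A - B) = ell1Norm (B - A) := by
  simp only [ell1Norm, Matrix.sub_apply, abs_sub_comm]

lemma mul_ell1Norm_le_ip {n : ℕ} {c : ℝ} {A B : Matrix (Fin n) (Fin n) ℝ}
    (h : ∀ i j, c * |B i j| ≤ A i j * B i j) : c * ell1Norm B ≤ ip A B := by
  rw [ell1Norm, ip_eq_sum_mul_apply, mul_sum]
  refine sum_le_sum fun i _ => ?_
  rw [mul_sum]
  exact sum_le_sum fun j _ => h i j

lemma mul_sub_eq_abs_sub_of_mul_self_eq_one {s z : ℝ} (hs : s * s = 1) (hz : |z| ≤ 1) :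
    s * (s - z) = |s - z| := by
  rw [abs_le] at hz
  rcases mul_self_eq_one_iff.mp hs with rfl | rfl
  · rw [abs_of_nonneg (by linarith)]; ring
  · rw [abs_of_nonpos (by linarith)]; ring

lemma u2_mul_self (n n₁ : ℕ) (j : Fin n) : u2 n n₁ j * u2 n n₁ j = 1 := by
  unfold u2; split_ifs <;> norm_num

lemma vref_eq_abs_mul_u2 (n n₁ n₂ : ℕ) (j : Fin n) :
    vref n n₁ n₂ j = |vref n n₁ n₂ j| * u2 n n₁ j := by
  unfold vref u2
  split_ifs
  · rw [abs_of_nonneg (by positivity), mul_one]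
  · rw [abs_neg, abs_of_nonneg (by positivity), mul_neg_one]

lemma wmin_nonneg (n n₁ n₂ : ℕ) : 0 ≤ wmin n n₁ n₂ :=
  le_min (by positivity) (by positivity)

lemma wmin_le_abs_vref (n n₁ n₂ : ℕ) (j : Fin n) : wmin n n₁ n₂ ≤ |vref n n₁ n₂ j| := by
  unfold vref
  split_ifs
  · rw [abs_of_nonneg (by positivity)]; exact min_le_right _ _
  · rw [abs_neg, abs_of_nonneg (by positivity)]; exact min_le_left _ _

lemma mul_abs_sub_le_Rmat_mul_sub (n n₁ n₂ p : ℕ) {γ : ℝ} (hγ : 0 ≤ γ) (i j : Fin n) {z : ℝ}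
    (hz : |z| ≤ 1) :
    p * γ * wmin n n₁ n₂ ^ 2 * |Zstar n n₁ i j - z| ≤
      Rmat n n₁ n₂ p γ i j * (Zstar n n₁ i j - z) := by
  set s := u2 n n₁ i * u2 n n₁ j
  have hs : s * s = 1 := by
    rw [mul_mul_mul_comm, u2_mul_self, u2_mul_self, one_mul]
  have hR : Rmat n n₁ n₂ p γ i j = p * γ * (|vref n n₁ n₂ i| * |vref n n₁ n₂ j|) * s := by
    rw [Rmat, Matrix.smul_apply, vecMulVec_apply, smul_eq_mul]
    conv_lhs => rw [vref_eq_abs_mul_u2 n n₁ n₂ i, vref_eq_abs_mul_u2 n n₁ n₂ j]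
    ring
  have hw : wmin n n₁ n₂ ^ 2 ≤ |vref n n₁ n₂ i| * |vref n n₁ n₂ j| := by
    rw [sq]
    exact mul_le_mul (wmin_le_abs_vref ..) (wmin_le_abs_vref ..) (wmin_nonneg ..) (abs_nonneg _)
  have hZ : Zstar n n₁ i j = s := vecMulVec_apply ..
  rw [hR, hZ, mul_assoc _ s, mul_sub_eq_abs_sub_of_mul_self_eq_one hs hz]
  gcongr

lemma mul_ell1Norm_sub_Zstar_le_ip_Rmat (n n₁ n₂ p : ℕ) {γ : ℝ} (hγ : 0 ≤ γ)
    {Z : Matrix (Fin n) (Fin n) ℝ} (hZ : ∀ i j, |Z i j| ≤ 1) :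
    p * γ * wmin n n₁ n₂ ^ 2 * ell1Norm (Z - Zstar n n₁) ≤
      ip (Rmat n n₁ n₂ p γ) (Zstar n n₁ - Z) := by
  rw [ell1Norm_sub_comm]
  exact mul_ell1Norm_le_ip fun i j => mul_abs_sub_le_Rmat_mul_sub n n₁ n₂ p hγ i j (hZ i j)

theorem excess_risk_lower_bound_general (n n₁ n₂ p : ℕ) (γ : ℝ)
    (hγ : 0 < γ) :
    (∀ Z : Matrix (Fin n) (Fin n) ℝ, (∀ i j, |Z i j| ≤ 1) →
      (p : ℝ) * γ * (wmin n n₁ n₂) ^ 2 * ell1Norm (Z - Zstar n n₁) ≤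
        ip (Rmat n n₁ n₂ p γ) (Zstar n n₁ - Z)) ∧
    (∀ Z ∈ Mopt n,
      (p : ℝ) * γ * (wmin n n₁ n₂) ^ 2 * ell1Norm (Z - Zstar n n₁) ≤
        ip (Rmat n n₁ n₂ p γ) (Zstar n n₁ - Z)) :=
  ⟨fun _ hZ => mul_ell1Norm_sub_Zstar_le_ip_Rmat n n₁ n₂ p hγ.le hZ,
    fun _ hZ => mul_ell1Norm_sub_Zstar_le_ip_Rmat n n₁ n₂ p hγ.le (abs_apply_le_one_of_mem_Mopt hZ)⟩

/-- excess-risk lower bound `⟨R, Z* - Z⟩ ≥ pγ·w_min²·‖Z - Z*‖₁` for every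
matrix `Z` with entries in `[-1,1]`, in particular for every `Z ∈ M_opt`. -/
theorem excess_risk_lower_bound (n n₁ n₂ p : ℕ) (γ : ℝ)
    (hn : n = n₁ + n₂) (hn₁ : 0 < n₁) (hn₂ : 0 < n₂) (hp : 1 ≤ p) (hγ : 0 < γ) :
    (∀ Z : Matrix (Fin n) (Fin n) ℝ, (∀ i j, |Z i j| ≤ 1) →
      (p : ℝ) * γ * (wmin n n₁ n₂) ^ 2 * ell1Norm (Z - Zstar n n₁) ≤
        ip (Rmat n n₁ n₂ p γ) (Zstar n n₁ - Z)) ∧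
    (∀ Z ∈ Mopt n,
      (p : ℝ) * γ * (wmin n n₁ n₂) ^ 2 * ell1Norm (Z - Zstar n n₁) ≤
        ip (Rmat n n₁ n₂ p γ) (Zstar n n₁ - Z)) :=
  excess_risk_lower_bound_general n n₁ n₂ p γ hγ

end
end

section
/- Let G be a real symmetric positive semidefinite n×n matrix (playing the role of YYᵀ), let λ_G := (1ₙᵀG1ₙ − tr(G))/(n(n−1)), A := G − λ_G·(E_n − I_n), Ã := G − λ_G·E_n, and let t ∈ ℝ. Then: (i) max over Z ∈ M_G⁺ of ⟨A, Z⟩ equals max over Z ∈ M_opt of ⟨A, Z⟩, and every maximizer of ⟨A, Z⟩ over M_opt is also a maximizer over M_G⁺; (ii) over M_opt, the sets of maximizers of ⟨A, Z⟩, of ⟨Ã, Z⟩, and of ⟨A − t·I_n, Z⟩ all coincide; (iii) if moreover G_{jj} > 0 for every j, then the set of maximizers of ⟨A, Z⟩ over M_G⁺ equals the set of maximizers of ⟨A, Z⟩ over M_opt. -/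
open Matrix Finset

noncomputable section

/-! On `Mopt n` every matrix has trace `n`, so adding a multiple of the identity to the objective
(which turns `A` into `Ã` or `A - t • 1`) shifts it by a constant and keeps its maximizers.
The diagonal of `A` is that of `G`, hence nonnegative. Raising the diagonal of `Z ∈ MGplus n`
to `1` keeps it positive semidefinite, lands in `Mopt n`, and increases `⟨A, Z⟩` by
`∑ i, A i i * (1 - Z i i) ≥ 0`; when all `A i i > 0` the increase is strict unless `Z` already
has unit diagonal. -/

section

variable {n : ℕ}

lemma ip_add_right (A B C : Matrix (Fin n) (Fin n) ℝ) : ip A (B + C) = ip A B + ip A C := by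
  simp only [ip, Matrix.mul_add, trace_add]

lemma ip_diagonal (A : Matrix (Fin n) (Fin n) ℝ) (d : Fin n → ℝ) :
    ip A (diagonal d) = ∑ i, A i i * d i := by
  simp only [ip, trace, diag_apply, mul_diagonal, transpose_apply]

lemma ip_sub_smul_one (A Z : Matrix (Fin n) (Fin n) ℝ) (c : ℝ) :
    ip (A - c • 1) Z = ip A Z - c * trace Z := by
  simp [ip, transpose_sub, Matrix.sub_mul, trace_sub]

lemma trace_eq_of_mem_Mopt {Z : Matrix (Fin n) (Fin n) ℝ} (hZ : Z ∈ Mopt n) : trace Z = n := by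
  simp [trace, hZ.2]

lemma Mopt_subset_MGplus (n : ℕ) : Mopt n ⊆ MGplus n := fun _ hZ => ⟨hZ.1, fun i => (hZ.2 i).le⟩

def fillDiag (Z : Matrix (Fin n) (Fin n) ℝ) : Matrix (Fin n) (Fin n) ℝ :=
  Z + diagonal fun i => 1 - Z i i

lemma fillDiag_mem_Mopt {Z : Matrix (Fin n) (Fin n) ℝ} (hZ : Z ∈ MGplus n) :
    fillDiag Z ∈ Mopt n :=
  ⟨hZ.1.add (posSemidef_diagonal_iff.mpr fun i => sub_nonneg.mpr (hZ.2 i)), fun i => by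
    simp [fillDiag]⟩

lemma ip_fillDiag (A Z : Matrix (Fin n) (Fin n) ℝ) :
    ip A (fillDiag Z) = ip A Z + ∑ i, A i i * (1 - Z i i) := by
  rw [fillDiag, ip_add_right, ip_diagonal]

lemma ip_le_ip_fillDiag {A Z : Matrix (Fin n) (Fin n) ℝ} (hA : ∀ i, 0 ≤ A i i)
    (hZ : Z ∈ MGplus n) : ip A Z ≤ ip A (fillDiag Z) := by
  rw [ip_fillDiag]
  exact le_add_of_nonneg_right <| sum_nonneg fun i _ => mul_nonneg (hA i) (sub_nonneg.mpr (hZ.2 i))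

lemma sSup_ip_image_MGplus {A : Matrix (Fin n) (Fin n) ℝ} (hA : ∀ i, 0 ≤ A i i) :
    sSup (ip A '' MGplus n) = sSup (ip A '' Mopt n) := by
  refine csSup_eq_csSup_of_forall_exists_le ?_ ?_
  · rintro _ ⟨Z, hZ, rfl⟩
    exact ⟨_, ⟨_, fillDiag_mem_Mopt hZ, rfl⟩, ip_le_ip_fillDiag hA hZ⟩
  · rintro _ ⟨Z, hZ, rfl⟩
    exact ⟨_, ⟨Z, Mopt_subset_MGplus n hZ, rfl⟩, le_rfl⟩

lemma isMaxOn_MGplus_of_isMaxOn_Mopt {A Zhat : Matrix (Fin n) (Fin n) ℝ} (hA : ∀ i, 0 ≤ A i i)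
    (h : IsMaxOn (ip A) (Mopt n) Zhat) : IsMaxOn (ip A) (MGplus n) Zhat := fun _ hZ =>
  (ip_le_ip_fillDiag hA hZ).trans (h (fillDiag_mem_Mopt hZ))

lemma mem_Mopt_of_isMaxOn_MGplus {A Zhat : Matrix (Fin n) (Fin n) ℝ} (hA : ∀ i, 0 < A i i)
    (hZhat : Zhat ∈ MGplus n) (h : IsMaxOn (ip A) (MGplus n) Zhat) : Zhat ∈ Mopt n := by
  have hgap : ∀ i ∈ univ, 0 ≤ A i i * (1 - Zhat i i) := fun i _ =>
    mul_nonneg (hA i).le (sub_nonneg.mpr (hZhat.2 i))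
  have hsum : ∑ i, A i i * (1 - Zhat i i) = 0 := by
    have : ip A (fillDiag Zhat) ≤ ip A Zhat := h (Mopt_subset_MGplus n (fillDiag_mem_Mopt hZhat))
    rw [ip_fillDiag] at this
    exact le_antisymm (by linarith) (sum_nonneg hgap)
  refine ⟨hZhat.1, fun i => ?_⟩
  have := (mul_eq_zero.mp ((sum_eq_zero_iff_of_nonneg hgap).mp hsum i (mem_univ i))).resolve_left
    (hA i).ne'
  linarith

lemma isMaxOn_MGplus_iff {A Zhat : Matrix (Fin n) (Fin n) ℝ} (hA : ∀ i, 0 < A i i) :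
    (Zhat ∈ MGplus n ∧ IsMaxOn (ip A) (MGplus n) Zhat) ↔
      (Zhat ∈ Mopt n ∧ IsMaxOn (ip A) (Mopt n) Zhat) :=
  ⟨fun ⟨hZhat, h⟩ => ⟨mem_Mopt_of_isMaxOn_MGplus hA hZhat h, h.on_subset (Mopt_subset_MGplus n)⟩,
    fun ⟨hZhat, h⟩ => ⟨Mopt_subset_MGplus n hZhat,
      isMaxOn_MGplus_of_isMaxOn_Mopt (fun i => (hA i).le) h⟩⟩

lemma isMaxOn_Mopt_sub_smul_one_iff {A Zhat : Matrix (Fin n) (Fin n) ℝ} (hZhat : Zhat ∈ Mopt n)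
    (c : ℝ) : IsMaxOn (ip (A - c • 1)) (Mopt n) Zhat ↔ IsMaxOn (ip A) (Mopt n) Zhat := by
  simp only [isMaxOn_iff, ip_sub_smul_one, trace_eq_of_mem_Mopt hZhat]
  exact forall₂_congr fun Z hZ => by rw [trace_eq_of_mem_Mopt hZ, sub_le_sub_iff_right]

lemma diag_sub_smul_En_sub_one (G : Matrix (Fin n) (Fin n) ℝ) (c : ℝ) (i : Fin n) :
    (G - c • (En n - 1)) i i = G i i := by
  simp [En]

lemma sub_smul_En (G : Matrix (Fin n) (Fin n) ℝ) (c : ℝ) :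
    G - c • En n = G - c • (En n - 1) - c • 1 := by
  module

end

theorem sdp_equivalences_general (n : ℕ) (G : Matrix (Fin n) (Fin n) ℝ)
    (hG : G.PosSemidef) (t : ℝ) :
    let lamG : ℝ := ((∑ i, ∑ j, G i j) - Matrix.trace G) / ((n : ℝ) * ((n : ℝ) - 1));
    let A := G - lamG • (En n - 1);
    let Atil := G - lamG • En n;
    (sSup (ip A '' MGplus n) = sSup (ip A '' Mopt n)) ∧
    (∀ Zhat ∈ Mopt n, (∀ Z ∈ Mopt n, ip A Z ≤ ip A Zhat) →
      ∀ Z ∈ MGplus n, ip A Z ≤ ip A Zhat) ∧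
    (∀ Zhat ∈ Mopt n,
      ((∀ Z ∈ Mopt n, ip A Z ≤ ip A Zhat) ↔
        (∀ Z ∈ Mopt n, ip Atil Z ≤ ip Atil Zhat)) ∧
      ((∀ Z ∈ Mopt n, ip A Z ≤ ip A Zhat) ↔
        (∀ Z ∈ Mopt n,
          ip (A - t • (1 : Matrix (Fin n) (Fin n) ℝ)) Z ≤
            ip (A - t • (1 : Matrix (Fin n) (Fin n) ℝ)) Zhat))) ∧
    ((∀ j, 0 < G j j) →
      ∀ Zhat : Matrix (Fin n) (Fin n) ℝ,
        (Zhat ∈ MGplus n ∧ ∀ Z ∈ MGplus n, ip A Z ≤ ip A Zhat) ↔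
        (Zhat ∈ Mopt n ∧ ∀ Z ∈ Mopt n, ip A Z ≤ ip A Zhat)) := by
  intro lamG A Atil
  have hAG : ∀ i, A i i = G i i := diag_sub_smul_En_sub_one G lamG
  have hA : ∀ i, 0 ≤ A i i := fun i => (hAG i).symm ▸ hG.diag_nonneg
  have hAtil : Atil = A - lamG • 1 := sub_smul_En G lamG
  refine ⟨sSup_ip_image_MGplus hA, fun _ _ => isMaxOn_MGplus_of_isMaxOn_Mopt hA,
    fun Zhat hZhat => ⟨?_, (isMaxOn_Mopt_sub_smul_one_iff hZhat t).symm⟩,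
    fun hGpos _ => isMaxOn_MGplus_iff fun i => (hAG i).symm ▸ hGpos i⟩
  rw [hAtil]
  exact (isMaxOn_Mopt_sub_smul_one_iff hZhat lamG).symm

/-- equivalence of the SDP, SDP1 and OracleSDP optimization goals. -/
theorem sdp_equivalences (n : ℕ) (hn : 2 ≤ n) (G : Matrix (Fin n) (Fin n) ℝ)
    (hG : G.PosSemidef) (t : ℝ) :
    let lamG : ℝ := ((∑ i, ∑ j, G i j) - Matrix.trace G) / ((n : ℝ) * ((n : ℝ) - 1));
    let A := G - lamG • (En n - 1);
    let Atil := G - lamG • En n;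
    (sSup (ip A '' MGplus n) = sSup (ip A '' Mopt n)) ∧
    (∀ Zhat ∈ Mopt n, (∀ Z ∈ Mopt n, ip A Z ≤ ip A Zhat) →
      ∀ Z ∈ MGplus n, ip A Z ≤ ip A Zhat) ∧
    (∀ Zhat ∈ Mopt n,
      ((∀ Z ∈ Mopt n, ip A Z ≤ ip A Zhat) ↔
        (∀ Z ∈ Mopt n, ip Atil Z ≤ ip Atil Zhat)) ∧
      ((∀ Z ∈ Mopt n, ip A Z ≤ ip A Zhat) ↔
        (∀ Z ∈ Mopt n,
          ip (A - t • (1 : Matrix (Fin n) (Fin n) ℝ)) Z ≤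
            ip (A - t • (1 : Matrix (Fin n) (Fin n) ℝ)) Zhat))) ∧
    ((∀ j, 0 < G j j) →
      ∀ Zhat : Matrix (Fin n) (Fin n) ℝ,
        (Zhat ∈ MGplus n ∧ ∀ Z ∈ MGplus n, ip A Z ≤ ip A Zhat) ↔
        (Zhat ∈ Mopt n ∧ ∀ Z ∈ Mopt n, ip A Z ≤ ip A Zhat)) :=
  sdp_equivalences_general n G hG t

end
end

section
/- (a) For every x ∈ {−1,1}ⁿ, Σ_{i=1}^n x_i·⟨D_i, μ⁽¹⁾−μ⁽²⁾⟩ ≤ (2(n−1)/n)·Σ_{i=1}^n |⟨Z_i, μ⁽¹⁾−μ⁽²⁾⟩|. (b) ‖M_Y‖₂ ≤ 4·√n·√(w₁w₂)·sup over unit vectors q ∈ S^{n−1} of |Σ_{i=1}^n q_i·⟨Z_i, μ⁽¹⁾−μ⁽²⁾⟩|. -/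
open Matrix Finset

noncomputable section

/-!
Put `a i = ⟪Z i, μ1 - μ2⟫`, so that `⟪D i, μ1 - μ2⟫ = a i - ā` with `ā` the mean of `a`.

(a) Centering is self-adjoint: `∑ x i (a i - ā) = ∑ a i (x i - x̄)`, and for a sign vector
`|x i - x̄| ≤ 2 (n - 1) / n`, since `n (x i - x̄)` is `(n - 1) x i` minus the other `n - 1` signs.

(b) `Ē = v (μ1 - μ2)ᵀ` with `v = vref n n₁ n₂` and `‖v‖² = n w₁ w₂`, hence `M_Y = v dᵀ + d vᵀ`
with `d = D (μ1 - μ2) = a - ā 𝟙`. Each rank-one term has operator norm `‖v‖ ‖d‖`, centering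
does not increase the Euclidean norm, and `‖a‖` is attained as `|⟪q, a⟫|` at `q = a / ‖a‖`.
-/

section CenteredSums

variable {ι : Type*} [Fintype ι]

lemma sum_mul_sub_mean_comm (N : ℝ) (x a : ι → ℝ) :
    ∑ i, x i * (a i - (∑ j, a j) / N) = ∑ i, a i * (x i - (∑ j, x j) / N) := by
  simp only [mul_sub, sum_sub_distrib, ← sum_mul, mul_comm (x _) (a _)]
  ring

lemma abs_sub_mean_le_of_abs_eq_one {x : ι → ℝ} (hx : ∀ j, |x j| = 1) (i : ι) :
    |x i - (∑ j, x j) / Fintype.card ι| ≤ 2 * (Fintype.card ι - 1) / Fintype.card ι := by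
  classical
  set N : ℝ := (Fintype.card ι : ℝ)
  have hN : 1 ≤ N := Nat.one_le_cast.2 (Fintype.card_pos_iff.2 ⟨i⟩)
  have hrest : |∑ j ∈ univ.erase i, x j| ≤ N - 1 := by
    calc |∑ j ∈ univ.erase i, x j| ≤ ∑ j ∈ univ.erase i, |x j| := abs_sum_le_sum_abs _ _
      _ = N - 1 := by simp [hx, card_erase_of_mem, N, Nat.cast_sub (Fintype.card_pos_iff.2 ⟨i⟩)]
  have hsplit : x i - (∑ j, x j) / N = ((N - 1) * x i - ∑ j ∈ univ.erase i, x j) / N := by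
    rw [← add_sum_erase _ _ (mem_univ i)]
    field_simp
    ring
  rw [hsplit, abs_div, abs_of_pos (show 0 < N by linarith),
    div_le_div_iff_of_pos_right (by linarith)]
  calc |(N - 1) * x i - ∑ j ∈ univ.erase i, x j|
      ≤ |(N - 1) * x i| + |∑ j ∈ univ.erase i, x j| := abs_sub _ _
    _ ≤ (N - 1) + (N - 1) := by
      rw [abs_mul, hx, abs_of_nonneg (by linarith), mul_one]
      linarith
    _ = 2 * (N - 1) := by ring

theorem sum_mul_sub_mean_le (a x : ι → ℝ) (hx : ∀ i, x i = 1 ∨ x i = -1) :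
    ∑ i, x i * (a i - (∑ j, a j) / Fintype.card ι) ≤
      2 * (Fintype.card ι - 1) / Fintype.card ι * ∑ i, |a i| := by
  have habs : ∀ i, |x i| = 1 := fun i => by rcases hx i with h | h <;> simp [h]
  rw [sum_mul_sub_mean_comm, mul_sum]
  refine sum_le_sum fun i _ => ?_
  calc a i * (x i - (∑ j, x j) / Fintype.card ι)
      ≤ |a i| * |x i - (∑ j, x j) / Fintype.card ι| := by
        rw [← abs_mul]
        exact le_abs_self _
    _ ≤ |a i| * (2 * (Fintype.card ι - 1) / Fintype.card ι) := by
        gcongr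
        exact abs_sub_mean_le_of_abs_eq_one habs i
    _ = 2 * (Fintype.card ι - 1) / Fintype.card ι * |a i| := mul_comm _ _

lemma sum_sq_sub_mean_le (a : ι → ℝ) :
    ∑ i, (a i - (∑ j, a j) / Fintype.card ι) ^ 2 ≤ ∑ i, a i ^ 2 := by
  set N : ℝ := (Fintype.card ι : ℝ)
  set s := ∑ j, a j
  have hexpand : ∑ i, (a i - s / N) ^ 2 = ∑ i, a i ^ 2 - 2 * (s / N) * s + N * (s / N) ^ 2 := by
    simp only [sub_sq, sum_add_distrib, sum_sub_distrib, ← sum_mul, ← mul_sum, sum_const,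
      card_univ, nsmul_eq_mul, N, s]
    ring
  rcases eq_or_ne N 0 with hN | hN
  · simp [hN]
  · have hcross : 2 * (s / N) * s - N * (s / N) ^ 2 = s ^ 2 / N := by
      field_simp
      ring
    have : 0 ≤ s ^ 2 / N := by positivity
    linarith

lemma sum_sub_mean_mul {κ : Type*} [Fintype κ] (N : ℝ) (Z : ι → κ → ℝ) (c : κ → ℝ) (i : ι) :
    ∑ k, (Z i k - 1 / N * ∑ j, Z j k) * c k =
      ∑ k, Z i k * c k - (∑ j, ∑ k, Z j k * c k) / N := by
  simp only [sub_mul, sum_sub_distrib, sum_mul, mul_sum]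
  rw [sum_comm]
  congr 1
  simp only [div_eq_inv_mul, mul_sum, mul_assoc, one_mul]

end CenteredSums

lemma abs_sum_mul_le_sqrt_mul_sqrt {ι : Type*} [Fintype ι] (f g : ι → ℝ) :
    |∑ i, f i * g i| ≤ √(∑ i, f i ^ 2) * √(∑ i, g i ^ 2) := by
  rw [← Real.sqrt_mul (by positivity), ← Real.sqrt_sq_eq_abs]
  exact Real.sqrt_le_sqrt (sum_mul_sq_le_sq_mul_sq _ f g)

lemma euclNorm_le_sSup_abs_sum_mul {k : ℕ} (a : Fin k → ℝ) :
    euclNorm a ≤ sSup {y : ℝ | ∃ q : Fin k → ℝ, ∑ i, q i ^ 2 = 1 ∧ y = |∑ i, q i * a i|} := by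
  unfold euclNorm
  set r := √(∑ i, a i ^ 2)
  have hbdd : BddAbove {y : ℝ | ∃ q : Fin k → ℝ, ∑ i, q i ^ 2 = 1 ∧ y = |∑ i, q i * a i|} := by
    refine ⟨r, ?_⟩
    rintro _ ⟨q, hq, rfl⟩
    simpa [hq] using abs_sum_mul_le_sqrt_mul_sqrt q a
  have hr0 : 0 ≤ r := Real.sqrt_nonneg _
  rcases hr0.eq_or_lt with h0 | hpos
  · rw [← h0]
    exact Real.sSup_nonneg (by rintro _ ⟨q, -, rfl⟩; exact abs_nonneg _)
  have hr2 : r ^ 2 = ∑ i, a i ^ 2 := Real.sq_sqrt (by positivity)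
  refine le_csSup hbdd ⟨fun i => a i / r, ?_, ?_⟩
  · simp only [div_pow, ← sum_div, ← hr2]
    exact div_self (by positivity)
  · have : ∑ i, a i / r * a i = r := by
      simp only [div_mul_eq_mul_div, ← sq, ← sum_div, ← hr2]
      field_simp
    rw [this, abs_of_pos hpos]

lemma euclNorm_vref {n n₁ n₂ : ℕ} (hn : n = n₁ + n₂) :
    euclNorm (vref n n₁ n₂) = √n * √((n₁ : ℝ) / n * ((n₂ : ℝ) / n)) := by
  rw [euclNorm, ← Real.sqrt_mul (Nat.cast_nonneg _)]
  congr 1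
  subst hn
  simp [vref, Fin.sum_univ_add]
  ring

lemma euclNorm_eq_norm_toLp {k : ℕ} (x : Fin k → ℝ) : euclNorm x = ‖WithLp.toLp 2 x‖ := by
  simp [euclNorm, EuclideanSpace.norm_eq]

lemma opNorm_add_le {k l : ℕ} (A B : Matrix (Fin k) (Fin l) ℝ) :
    opNorm (A + B) ≤ opNorm A + opNorm B := by
  simpa only [opNorm, map_add] using norm_add_le _ _

lemma opNorm_vecMulVec {k l : ℕ} (u : Fin k → ℝ) (v : Fin l → ℝ) :
    opNorm (vecMulVec u v) = euclNorm u * euclNorm v := by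
  have hlin := (LinearEquiv.symm_apply_eq _).1
    (InnerProductSpace.symm_toEuclideanLin_rankOne (𝕜 := ℝ) (WithLp.toLp 2 u) (WithLp.toLp 2 v))
  rw [star_trivial] at hlin
  have h : (toEuclideanLin (vecMulVec u v)).toContinuousLinearMap =
      InnerProductSpace.rankOne ℝ (WithLp.toLp 2 u) (WithLp.toLp 2 v) := by
    ext1 x
    rw [LinearMap.coe_toContinuousLinearMap', ← hlin]
    rfl
  rw [opNorm, h, InnerProductSpace.norm_rankOne, euclNorm_eq_norm_toLp, euclNorm_eq_norm_toLp]

lemma opNorm_vecMulVec_add_vecMulVec_le {k : ℕ} (u v : Fin k → ℝ) :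
    opNorm (vecMulVec u v + vecMulVec v u) ≤ 2 * euclNorm u * euclNorm v := by
  calc opNorm (vecMulVec u v + vecMulVec v u)
      ≤ opNorm (vecMulVec u v) + opNorm (vecMulVec v u) := opNorm_add_le _ _
    _ = 2 * euclNorm u * euclNorm v := by
      rw [opNorm_vecMulVec, opNorm_vecMulVec]
      ring

lemma vecMulVec_mul_transpose_add {m n α : Type*} [Fintype n] [CommSemiring α]
    (u : m → α) (w : n → α) (B : Matrix m n α) :
    vecMulVec u w * Bᵀ + B * (vecMulVec u w)ᵀ = vecMulVec u (B *ᵥ w) + vecMulVec (B *ᵥ w) u := by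
  rw [vecMulVec_mul, vecMul_transpose, transpose_vecMulVec, mul_vecMulVec]

theorem reduction_comparison_general (n n₁ n₂ p : ℕ) (hn : n = n₁ + n₂)
    (μ1 μ2 : Fin p → ℝ) (Z : Fin n → Fin p → ℝ) :
    let D : Fin n → Fin p → ℝ := fun i k => Z i k - (1 / (n : ℝ)) * ∑ j, Z j k;
    let Ebar : Matrix (Fin n) (Fin p) ℝ :=
      Matrix.of fun i k => if (i : ℕ) < n₁ then ((n₂ : ℝ) / n) * (μ1 k - μ2 k)
        else ((n₁ : ℝ) / n) * (μ2 k - μ1 k);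
    let Dm : Matrix (Fin n) (Fin p) ℝ := Matrix.of fun i k => D i k;
    let MY := Ebar * Dmᵀ + Dm * Ebarᵀ;
    (∀ x : Fin n → ℝ, (∀ i, x i = 1 ∨ x i = -1) →
      ∑ i, x i * (∑ k, D i k * (μ1 k - μ2 k)) ≤
        (2 * ((n : ℝ) - 1) / n) * ∑ i, |∑ k, Z i k * (μ1 k - μ2 k)|) ∧
    opNorm MY ≤ 4 * Real.sqrt n * Real.sqrt (((n₁ : ℝ) / n) * ((n₂ : ℝ) / n)) *
      sSup {y : ℝ | ∃ q : Fin n → ℝ, (∑ i, (q i) ^ 2) = 1 ∧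
        y = |∑ i, q i * (∑ k, Z i k * (μ1 k - μ2 k))|} := by
  intro D Ebar Dm MY
  set a : Fin n → ℝ := fun i => ∑ k, Z i k * (μ1 k - μ2 k)
  set S := {y : ℝ | ∃ q : Fin n → ℝ, (∑ i, (q i) ^ 2) = 1 ∧ y = |∑ i, q i * a i|}
  have hd : Dm *ᵥ (μ1 - μ2) = fun i => a i - (∑ j, a j) / n := by
    ext i
    exact sum_sub_mean_mul _ Z _ i
  have hEbar : Ebar = vecMulVec (vref n n₁ n₂) (μ1 - μ2) := by
    ext i k
    simp only [Ebar, vref, of_apply, vecMulVec_apply, Pi.sub_apply]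
    split_ifs <;> ring
  refine ⟨fun x hx => ?_, ?_⟩
  · have h := sum_mul_sub_mean_le a x hx
    rw [Fintype.card_fin] at h
    simpa only [D, sum_sub_mean_mul] using h
  · have hS : 0 ≤ sSup S := Real.sSup_nonneg (by rintro _ ⟨q, -, rfl⟩; exact abs_nonneg _)
    have hdS : euclNorm (Dm *ᵥ (μ1 - μ2)) ≤ sSup S := by
      refine le_trans (Real.sqrt_le_sqrt ?_) (euclNorm_le_sSup_abs_sum_mul a)
      simpa only [hd, Fintype.card_fin] using sum_sq_sub_mean_le a
    calc opNorm MY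
        = opNorm (vecMulVec (vref n n₁ n₂) (Dm *ᵥ (μ1 - μ2)) +
            vecMulVec (Dm *ᵥ (μ1 - μ2)) (vref n n₁ n₂)) := by
          rw [← vecMulVec_mul_transpose_add, ← hEbar]
      _ ≤ 2 * euclNorm (vref n n₁ n₂) * euclNorm (Dm *ᵥ (μ1 - μ2)) :=
          opNorm_vecMulVec_add_vecMulVec_le _ _
      _ ≤ 2 * euclNorm (vref n n₁ n₂) * sSup S :=
          mul_le_mul_of_nonneg_left hdS (by unfold euclNorm; positivity)
      _ ≤ 4 * √n * √((n₁ : ℝ) / n * ((n₂ : ℝ) / n)) * sSup S := by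
          rw [euclNorm_vref hn]
          have : 0 ≤ √n * √((n₁ : ℝ) / n * ((n₂ : ℝ) / n)) * sSup S := by positivity
          linarith

/-- the deterministic comparison (reduction) lemma, for the centered vectors
`D_i = Z_i - (1/n)Σ_j Z_j` and the cross term `M_Y = Ē Dᵀ + D Ēᵀ`. -/
theorem reduction_comparison (n n₁ n₂ p : ℕ) (hn : n = n₁ + n₂)
    (hn₁ : 0 < n₁) (hn₂ : 0 < n₂)
    (μ1 μ2 : Fin p → ℝ) (Z : Fin n → Fin p → ℝ) :
    let D : Fin n → Fin p → ℝ := fun i k => Z i k - (1 / (n : ℝ)) * ∑ j, Z j k;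
    let Ebar : Matrix (Fin n) (Fin p) ℝ :=
      Matrix.of fun i k => if (i : ℕ) < n₁ then ((n₂ : ℝ) / n) * (μ1 k - μ2 k)
        else ((n₁ : ℝ) / n) * (μ2 k - μ1 k);
    let Dm : Matrix (Fin n) (Fin p) ℝ := Matrix.of fun i k => D i k;
    let MY := Ebar * Dmᵀ + Dm * Ebarᵀ;
    (∀ x : Fin n → ℝ, (∀ i, x i = 1 ∨ x i = -1) →
      ∑ i, x i * (∑ k, D i k * (μ1 k - μ2 k)) ≤
        (2 * ((n : ℝ) - 1) / n) * ∑ i, |∑ k, Z i k * (μ1 k - μ2 k)|) ∧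
    opNorm MY ≤ 4 * Real.sqrt n * Real.sqrt (((n₁ : ℝ) / n) * ((n₂ : ℝ) / n)) *
      sSup {y : ℝ | ∃ q : Fin n → ℝ, (∑ i, (q i) ^ 2) = 1 ∧
        y = |∑ i, q i * (∑ k, Z i k * (μ1 k - μ2 k))|} :=
  reduction_comparison_general n n₁ n₂ p hn μ1 μ2 Z
end
end

section
/- B̄ − R = W₀ − 𝕎 − (tr(R)/(n−1))·(I_n − E_n/n), where tr(R) = w₁w₂·n·pγ. In particular, when V₁ = V₂ one has W₀ = 𝕎 = 0, so B̄ − R = −(tr(R)/(n−1))·(I_n − E_n/n). -/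
open Matrix Finset

noncomputable section

def Dmat (n n₁ : ℕ) (V₁ V₂ : ℝ) : Matrix (Fin n) (Fin n) ℝ :=
  Matrix.diagonal fun j => if (j : ℕ) < n₁ then V₁ else V₂

def Gbar (n n₁ n₂ p : ℕ) (γ V₁ V₂ : ℝ) : Matrix (Fin n) (Fin n) ℝ :=
  centering n * Dmat n n₁ V₁ V₂ * centering n + Rmat n n₁ n₂ p γ

def taubar (n n₁ n₂ p : ℕ) (γ V₁ V₂ : ℝ) : ℝ :=
  Matrix.trace (Gbar n n₁ n₂ p γ V₁ V₂) / n

def lambar (n n₁ n₂ p : ℕ) (γ V₁ V₂ : ℝ) : ℝ :=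
  ((∑ i, ∑ j, Gbar n n₁ n₂ p γ V₁ V₂ i j) - Matrix.trace (Gbar n n₁ n₂ p γ V₁ V₂)) /
    ((n : ℝ) * ((n : ℝ) - 1))

def Bbar (n n₁ n₂ p : ℕ) (γ V₁ V₂ : ℝ) : Matrix (Fin n) (Fin n) ℝ :=
  Gbar n n₁ n₂ p γ V₁ V₂ - lambar n n₁ n₂ p γ V₁ V₂ • (En n - 1) -
    taubar n n₁ n₂ p γ V₁ V₂ • (1 : Matrix (Fin n) (Fin n) ℝ)

def W0 (n n₁ n₂ : ℕ) (V₁ V₂ : ℝ) : Matrix (Fin n) (Fin n) ℝ :=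
  Matrix.diagonal fun j => if (j : ℕ) < n₁ then (V₁ - V₂) * ((n₂ : ℝ) / n)
    else -((V₁ - V₂) * ((n₁ : ℝ) / n))

def blockDiagE (n n₁ : ℕ) : Matrix (Fin n) (Fin n) ℝ :=
  Matrix.of fun i j =>
    if (i : ℕ) < n₁ ∧ (j : ℕ) < n₁ then 1
    else if n₁ ≤ (i : ℕ) ∧ n₁ ≤ (j : ℕ) then -1 else 0

def W2m (n n₁ : ℕ) (V₁ V₂ : ℝ) : Matrix (Fin n) (Fin n) ℝ :=
  ((V₁ - V₂) / n) • blockDiagE n n₁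

def Wbb (n n₁ n₂ : ℕ) (V₁ V₂ : ℝ) : Matrix (Fin n) (Fin n) ℝ :=
  W2m n n₁ V₁ V₂ + ((V₁ - V₂) * ((n₂ : ℝ) / n - (n₁ : ℝ) / n) / n) • En n



-- ===== auxiliary lemmas =====

theorem card_filter_lt' (n n₁ : ℕ) (h : n₁ ≤ n) :
    (Finset.univ.filter (fun j : Fin n => (j:ℕ) < n₁)).card = n₁ := by
  have e : {j : Fin n // (j:ℕ) < n₁} ≃ Fin n₁ :=
    { toFun := fun j => ⟨j.1, j.2⟩
      invFun := fun k => ⟨⟨k, lt_of_lt_of_le k.2 h⟩, k.2⟩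
      left_inv := fun j => rfl
      right_inv := fun k => rfl }
  have := Fintype.card_congr e
  simpa [Fintype.card_subtype] using this

theorem sum_ite_lt (n n₁ n₂ : ℕ) (hn : n = n₁ + n₂) (a b : ℝ) :
    ∑ j : Fin n, (if (j:ℕ) < n₁ then a else b) = n₁ * a + n₂ * b := by
  rw [Finset.sum_ite, Finset.sum_const, Finset.sum_const,
    card_filter_lt' n n₁ (by omega)]
  have : (Finset.univ.filter (fun j : Fin n => ¬ (j:ℕ) < n₁)).card = n₂ := by
    have := Finset.card_filter_add_card_filter_not
      (s := (Finset.univ : Finset (Fin n))) (p := fun j => (j:ℕ) < n₁)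
    rw [card_filter_lt' n n₁ (by omega)] at this
    simp at this ⊢
    omega
  rw [this]
  simp [nsmul_eq_mul]

theorem CDC_apply (n n₁ n₂ : ℕ) (V₁ V₂ : ℝ) (hn : n = n₁ + n₂) (i j : Fin n) :
    (centering n * Dmat n n₁ V₁ V₂ * centering n) i j
    = (if i = j then (if (i:ℕ)<n₁ then V₁ else V₂) else 0)
      - (if (i:ℕ)<n₁ then V₁ else V₂)/n - (if (j:ℕ)<n₁ then V₁ else V₂)/n
      + ((n₁:ℝ)*V₁+(n₂:ℝ)*V₂)/((n:ℝ)^2) := by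
  have hmul : centering n * Dmat n n₁ V₁ V₂ * centering n =
      Matrix.of fun i j => ∑ k, (centering n i k * (if (k:ℕ)<n₁ then V₁ else V₂)) * centering n k j := by
    ext i j
    rw [Matrix.mul_apply]
    refine Finset.sum_congr rfl fun k _ => ?_
    simp only [Dmat, Matrix.mul_diagonal]
  rw [hmul]
  simp only [Matrix.of_apply, centering, Matrix.sub_apply, Matrix.one_apply,
    Matrix.smul_apply, En, Matrix.of_apply, smul_eq_mul, mul_one]
  have expand : ∀ k : Fin n,
      ((if i = k then (1:ℝ) else 0) - (n:ℝ)⁻¹) * (if (k:ℕ)<n₁ then V₁ else V₂) *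
        ((if k = j then (1:ℝ) else 0) - (n:ℝ)⁻¹)
      = (if i = k then (if k = j then (if (k:ℕ)<n₁ then V₁ else V₂) else 0) else 0)
        - (n:ℝ)⁻¹ * (if i = k then (if (k:ℕ)<n₁ then V₁ else V₂) else 0)
        - (n:ℝ)⁻¹ * (if k = j then (if (k:ℕ)<n₁ then V₁ else V₂) else 0)
        + (n:ℝ)⁻¹ * (n:ℝ)⁻¹ * (if (k:ℕ)<n₁ then V₁ else V₂) := by
    intro k
    by_cases h2 : k = j
    · subst h2
      by_cases h1 : i = k <;> simp [h1] <;> split_ifs <;> ring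
    · by_cases h1 : i = k
      · subst h1
        simp [h2] <;> split_ifs <;> ring
      · simp [h1, h2] <;> split_ifs <;> ring
  rw [Finset.sum_congr rfl (fun k _ => expand k)]
  rw [Finset.sum_add_distrib, Finset.sum_sub_distrib, Finset.sum_sub_distrib,
    ← Finset.mul_sum, ← Finset.mul_sum, ← Finset.mul_sum,
    Finset.sum_ite_eq, Finset.sum_ite_eq, Finset.sum_ite_eq',
    sum_ite_lt n n₁ n₂ hn]
  simp only [Finset.mem_univ, if_true]
  by_cases h : i = j
  · subst h
    by_cases hi : (i:ℕ)<n₁ <;> simp [hi] <;> ring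
  · by_cases hi : (i:ℕ)<n₁ <;> by_cases hj : (j:ℕ)<n₁ <;> simp [h, hi, hj] <;> ring

theorem Gbar_apply (n n₁ n₂ p : ℕ) (γ V₁ V₂ : ℝ) (hn : n = n₁ + n₂) (i j : Fin n) :
    Gbar n n₁ n₂ p γ V₁ V₂ i j
    = ((if i = j then (if (i:ℕ)<n₁ then V₁ else V₂) else 0)
      - (if (i:ℕ)<n₁ then V₁ else V₂)/n - (if (j:ℕ)<n₁ then V₁ else V₂)/n
      + ((n₁:ℝ)*V₁+(n₂:ℝ)*V₂)/((n:ℝ)^2))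
      + ((p:ℝ)*γ) * ((if (i:ℕ)<n₁ then (n₂:ℝ)/n else -((n₁:ℝ)/n)) *
          (if (j:ℕ)<n₁ then (n₂:ℝ)/n else -((n₁:ℝ)/n))) := by
  rw [Gbar, Matrix.add_apply, CDC_apply n n₁ n₂ V₁ V₂ hn]
  simp [Rmat, vref, Matrix.vecMulVec_apply, mul_assoc]

theorem Gbar_trace (n n₁ n₂ p : ℕ) (γ V₁ V₂ : ℝ) (hn : n = n₁ + n₂) :
    Matrix.trace (Gbar n n₁ n₂ p γ V₁ V₂)
    = (n₁:ℝ) * (V₁ - V₁/n - V₁/n + ((n₁:ℝ)*V₁+(n₂:ℝ)*V₂)/((n:ℝ)^2)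
        + (p:ℝ)*γ*(((n₂:ℝ)/n)*((n₂:ℝ)/n)))
    + (n₂:ℝ) * (V₂ - V₂/n - V₂/n + ((n₁:ℝ)*V₁+(n₂:ℝ)*V₂)/((n:ℝ)^2)
        + (p:ℝ)*γ*(((n₁:ℝ)/n)*((n₁:ℝ)/n))) := by
  have key : ∀ i : Fin n, Gbar n n₁ n₂ p γ V₁ V₂ i i
      = if (i:ℕ)<n₁ then
          (V₁ - V₁/n - V₁/n + ((n₁:ℝ)*V₁+(n₂:ℝ)*V₂)/((n:ℝ)^2)
            + (p:ℝ)*γ*(((n₂:ℝ)/n)*((n₂:ℝ)/n)))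
        else
          (V₂ - V₂/n - V₂/n + ((n₁:ℝ)*V₁+(n₂:ℝ)*V₂)/((n:ℝ)^2)
            + (p:ℝ)*γ*(((n₁:ℝ)/n)*((n₁:ℝ)/n))) := by
    intro i
    rw [Gbar_apply n n₁ n₂ p γ V₁ V₂ hn i i]
    by_cases hi : (i:ℕ)<n₁ <;> simp [hi] <;> ring
  rw [Matrix.trace]
  simp only [Matrix.diag]
  rw [Finset.sum_congr rfl (fun i _ => key i), sum_ite_lt n n₁ n₂ hn]

theorem Gbar_sum (n n₁ n₂ p : ℕ) (γ V₁ V₂ : ℝ) (hn : n = n₁ + n₂)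
    (hn₁ : 0 < n₁) (hn₂ : 0 < n₂) :
    ∑ i, ∑ j, Gbar n n₁ n₂ p γ V₁ V₂ i j = 0 := by
  have hn0 : (n:ℝ) ≠ 0 := by
    have : 0 < n := by omega
    exact_mod_cast this.ne'
  have inner : ∀ i : Fin n, ∑ j, Gbar n n₁ n₂ p γ V₁ V₂ i j = 0 := by
    intro i
    rw [Finset.sum_congr rfl (fun j _ => Gbar_apply n n₁ n₂ p γ V₁ V₂ hn i j)]
    rw [Finset.sum_add_distrib, Finset.sum_add_distrib,
      Finset.sum_sub_distrib, Finset.sum_sub_distrib]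
    have s1 : ∑ j : Fin n, (if i = j then (if (i:ℕ)<n₁ then V₁ else V₂) else 0)
        = (if (i:ℕ)<n₁ then V₁ else V₂) := by
      rw [Finset.sum_ite_eq]; simp
    have s2 : ∑ _j : Fin n, (if (i:ℕ)<n₁ then V₁ else V₂)/(n:ℝ)
        = (n:ℝ) * ((if (i:ℕ)<n₁ then V₁ else V₂)/(n:ℝ)) := by
      rw [Finset.sum_const, Finset.card_univ]; simp [nsmul_eq_mul]
    have s3 : ∑ j : Fin n, (if (j:ℕ)<n₁ then V₁ else V₂)/(n:ℝ)
        = (n₁:ℝ)*(V₁/n) + (n₂:ℝ)*(V₂/n) := by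
      rw [Finset.sum_congr rfl (fun j _ => apply_ite (· / (n:ℝ)) _ V₁ V₂),
        sum_ite_lt n n₁ n₂ hn]
    have s4 : ∑ _j : Fin n, ((n₁:ℝ)*V₁+(n₂:ℝ)*V₂)/((n:ℝ)^2)
        = (n:ℝ) * (((n₁:ℝ)*V₁+(n₂:ℝ)*V₂)/((n:ℝ)^2)) := by
      rw [Finset.sum_const, Finset.card_univ]; simp [nsmul_eq_mul]
    have s5 : ∑ j : Fin n, ((p:ℝ)*γ) * ((if (i:ℕ)<n₁ then (n₂:ℝ)/n else -((n₁:ℝ)/n)) *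
          (if (j:ℕ)<n₁ then (n₂:ℝ)/n else -((n₁:ℝ)/n)))
        = ((p:ℝ)*γ) * ((if (i:ℕ)<n₁ then (n₂:ℝ)/n else -((n₁:ℝ)/n)) *
            ((n₁:ℝ)*((n₂:ℝ)/n) + (n₂:ℝ)*(-((n₁:ℝ)/n)))) := by
      rw [← Finset.mul_sum, ← Finset.mul_sum, sum_ite_lt n n₁ n₂ hn]
    rw [s1, s2, s3, s4, s5]
    field_simp
    split_ifs <;> ring
  rw [Finset.sum_congr rfl (fun i _ => inner i), Finset.sum_const]
  simp

set_option maxHeartbeats 2000000 in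
/-- bias decomposition `B̄ - R = W₀ - 𝕎 - (tr R/(n-1))·(I - E/n)`,
with `tr R = w₁w₂·n·pγ`, and the bias-free form when `V₁ = V₂`. -/
theorem bias_decomposition (n n₁ n₂ p : ℕ) (γ V₁ V₂ : ℝ)
    (hn : n = n₁ + n₂) (hn₁ : 0 < n₁) (hn₂ : 0 < n₂) (hp : 1 ≤ p) (hγ : 0 < γ) :
    Matrix.trace (Rmat n n₁ n₂ p γ) = ((n₁ : ℝ) / n) * ((n₂ : ℝ) / n) * n * p * γ ∧
    Bbar n n₁ n₂ p γ V₁ V₂ - Rmat n n₁ n₂ p γ =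
      W0 n n₁ n₂ V₁ V₂ - Wbb n n₁ n₂ V₁ V₂ -
        (Matrix.trace (Rmat n n₁ n₂ p γ) / ((n : ℝ) - 1)) • centering n ∧
    (V₁ = V₂ →
      W0 n n₁ n₂ V₁ V₂ = 0 ∧ Wbb n n₁ n₂ V₁ V₂ = 0 ∧
      Bbar n n₁ n₂ p γ V₁ V₂ - Rmat n n₁ n₂ p γ =
        -(Matrix.trace (Rmat n n₁ n₂ p γ) / ((n : ℝ) - 1)) • centering n) := by
  subst hn
  have hn0' : (n₁:ℝ) + (n₂:ℝ) ≠ 0 := by positivity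
  have hn1 : (n₁:ℝ) + (n₂:ℝ) - 1 ≠ 0 := by
    have h2 : (2:ℝ) ≤ (n₁:ℝ) + (n₂:ℝ) := by
      have : 2 ≤ n₁ + n₂ := by omega
      exact_mod_cast this
    linarith
  set n := n₁ + n₂ with hn
  have hNr : ((n:ℕ):ℝ) = (n₁:ℝ) + (n₂:ℝ) := by rw [hn]; push_cast; ring
  have hn0 : ((n:ℕ):ℝ) ≠ 0 := by rw [hNr]; exact hn0'
  have htrR : Matrix.trace (Rmat n n₁ n₂ p γ) = ((n₁:ℝ)/n)*((n₂:ℝ)/n)*n*p*γ := by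
    rw [Matrix.trace]
    simp only [Matrix.diag, Rmat, Matrix.smul_apply, Matrix.vecMulVec_apply, vref,
      smul_eq_mul]
    have key : ∀ i : Fin n, (p:ℝ)*γ * ((if (i:ℕ)<n₁ then (n₂:ℝ)/n else -((n₁:ℝ)/n)) *
          (if (i:ℕ)<n₁ then (n₂:ℝ)/n else -((n₁:ℝ)/n)))
        = if (i:ℕ)<n₁ then (p:ℝ)*γ*(((n₂:ℝ)/n)*((n₂:ℝ)/n))
          else (p:ℝ)*γ*(((n₁:ℝ)/n)*((n₁:ℝ)/n)) := by
      intro i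
      by_cases hi : (i:ℕ)<n₁ <;> simp [hi] <;> ring
    rw [Finset.sum_congr rfl (fun i _ => key i), sum_ite_lt n n₁ n₂ hn]
    simp only [hNr]
    field_simp
    ring
  have hT := Gbar_trace n n₁ n₂ p γ V₁ V₂ hn
  have hS := Gbar_sum n n₁ n₂ p γ V₁ V₂ hn hn₁ hn₂
  have hτ : taubar n n₁ n₂ p γ V₁ V₂
      = ((n₁:ℝ)*V₁+(n₂:ℝ)*V₂)*(((n:ℕ):ℝ)-1)/((n:ℕ):ℝ)^2
        + (p:ℝ)*γ*((n₁:ℝ)*(n₂:ℝ))/((n:ℕ):ℝ)^2 := by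
    rw [taubar, hT]
    simp only [hNr]
    field_simp
    ring
  have hlam : lambar n n₁ n₂ p γ V₁ V₂
      = -(((n₁:ℝ)*V₁+(n₂:ℝ)*V₂)/((n:ℕ):ℝ)^2)
        - (p:ℝ)*γ*((n₁:ℝ)*(n₂:ℝ))/(((n:ℕ):ℝ)^2*(((n:ℕ):ℝ)-1)) := by
    rw [lambar, hS, hT]
    simp only [hNr]
    field_simp
    ring
  have hmain : Bbar n n₁ n₂ p γ V₁ V₂ - Rmat n n₁ n₂ p γ =
      W0 n n₁ n₂ V₁ V₂ - Wbb n n₁ n₂ V₁ V₂ -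
        (Matrix.trace (Rmat n n₁ n₂ p γ) / ((n : ℝ) - 1)) • centering n := by
    rw [htrR]
    ext i j
    simp only [Bbar, Matrix.sub_apply, Matrix.add_apply, Matrix.smul_apply,
      Matrix.one_apply, smul_eq_mul, W0, Wbb, W2m, blockDiagE, En, centering,
      Matrix.diagonal_apply, Matrix.of_apply, Rmat, Matrix.vecMulVec_apply, vref]
    rw [Gbar_apply n n₁ n₂ p γ V₁ V₂ hn i j, hlam, hτ]
    by_cases hij : i = j
    · subst hij
      by_cases hi : (i:ℕ)<n₁
      · simp only [hi, if_true, if_pos rfl, and_self]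
        simp only [hNr]; field_simp; ring
      · simp only [hi, if_false, if_pos rfl, le_of_not_gt hi, and_self, if_true]
        simp only [hNr]; field_simp; ring
    · by_cases hi : (i:ℕ)<n₁
      · by_cases hj : (j:ℕ)<n₁
        · simp only [hij, hi, hj, if_true, if_false, and_self]
          simp only [hNr]; field_simp; ring
        · simp only [hij, hi, hj, if_true, if_false, and_false, false_and,
            le_of_not_gt hj, not_le.2 hi, and_true]
          simp only [hNr]; field_simp; ring
      · by_cases hj : (j:ℕ)<n₁
        · simp only [hij, hi, hj, if_true, if_false, and_true, false_and,
            le_of_not_gt hi, not_le.2 hj, true_and]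
          simp only [hNr]; field_simp; ring
        · simp only [hij, hi, hj, if_false, le_of_not_gt hi, le_of_not_gt hj,
            and_self, if_true]
          simp only [hNr]; field_simp; ring
  refine ⟨htrR, hmain, fun hV => ?_⟩
  subst hV
  have hW0 : W0 n n₁ n₂ V₁ V₁ = 0 := by
    ext i j
    simp only [W0, Matrix.diagonal_apply, sub_self, zero_mul, neg_zero, ite_self,
      Matrix.zero_apply]
  have hWbb : Wbb n n₁ n₂ V₁ V₁ = 0 := by
    ext i j
    simp [Wbb, W2m]
  refine ⟨hW0, hWbb, ?_⟩
  rw [hmain, hW0, hWbb]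
  ext i j
  simp

end
end

section
/- Assume n ≥ 4 and |V₁ − V₂| ≤ ξ·n·p·γ/3 for some ξ with ξ ≥ (1/(2n))·max(4, 1/w_min). Then ‖B̄ − R‖₂ ≤ (2/3)·ξ·n·p·γ. Moreover, if V₁ = V₂ then ‖B̄ − R‖₂ ≤ pγ/3. -/
open Matrix Finset

noncomputable section

/-!
The grand sum of `Ḡ` vanishes (`P₁` kills it and `v ⊥ 1ₙ`), so `λ̄ = -τ̄/(n-1)` and
`B̄ - R = C (D - c I) C` with `C = I - P₁` and `c = tr Ḡ/(n-1) = (n₁V₁ + n₂V₂)/n + pγ n₁n₂/(n(n-1))`.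
Since `C` is an orthogonal projection, `‖B̄ - R‖₂ ≤ maxⱼ |Dⱼⱼ - c| ≤ |V₁ - V₂| + pγ/3`, where
`n₁n₂ ≤ n²/4` and `n ≥ 4` bound the shift; finally `ξn ≥ 2`.
-/

open scoped Matrix.Norms.L2Operator

theorem IsStarProjection.norm_mul_mul_self_le {E : Type*} [NonUnitalNormedRing E] [StarRing E]
    [CStarRing E] {e : E} (he : IsStarProjection e) (x : E) : ‖e * x * e‖ ≤ ‖x‖ := by
  have h := he.norm_le
  calc ‖e * x * e‖ ≤ ‖e‖ * ‖x‖ * ‖e‖ := by grw [norm_mul_le, norm_mul_le]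
    _ ≤ 1 * ‖x‖ * 1 := by gcongr
    _ = ‖x‖ := by ring

lemma sum_fin_add_ite_lt (n₁ n₂ : ℕ) (x y : ℝ) :
    ∑ j : Fin (n₁ + n₂), (if (j : ℕ) < n₁ then x else y) = n₁ * x + n₂ * y := by
  simp [Fin.sum_univ_add]

lemma opNorm_eq_l2_opNorm {k l : ℕ} (A : Matrix (Fin k) (Fin l) ℝ) : opNorm A = ‖A‖ := rfl

lemma En_mul_En (n : ℕ) : En n * En n = (n : ℝ) • En n := by
  ext i j; simp [En, Matrix.mul_apply]

lemma En_mulVec_one (n : ℕ) : En n *ᵥ 1 = (n : ℝ) • 1 := by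
  ext i; simp [En, Matrix.mulVec, dotProduct]

lemma centering_mul_self (n : ℕ) : centering n * centering n = centering n := by
  rcases eq_or_ne (n : ℝ) 0 with h | h
  · simp [centering, h]
  · simp only [centering, sub_mul, mul_sub, one_mul, mul_one, smul_mul_smul_comm, En_mul_En,
      smul_smul]
    rw [show (n : ℝ)⁻¹ * (n : ℝ)⁻¹ * n = (n : ℝ)⁻¹ by field_simp]
    abel

lemma isStarProjection_centering (n : ℕ) : IsStarProjection (centering n) where
  isIdempotentElem := centering_mul_self n
  isSelfAdjoint := by
    ext i j
    simp [centering, En, Matrix.one_apply, eq_comm]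

lemma centering_mulVec_one (n : ℕ) : centering n *ᵥ 1 = 0 := by
  rcases eq_or_ne (n : ℝ) 0 with h | h
  · ext i; simp at h; subst h; exact i.elim0
  · simp [centering, Matrix.sub_mulVec, Matrix.smul_mulVec, En_mulVec_one, smul_smul, h]

section TwoGroups

variable {n n₁ n₂ p : ℕ} {γ V₁ V₂ : ℝ}

lemma sum_vref (hn : n = n₁ + n₂) : ∑ j, vref n n₁ n₂ j = 0 := by
  subst hn
  simp only [vref, sum_fin_add_ite_lt]
  ring

lemma sum_Gbar_eq_zero (hn : n = n₁ + n₂) : ∑ i, ∑ j, Gbar n n₁ n₂ p γ V₁ V₂ i j = 0 := by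
  have hG : Gbar n n₁ n₂ p γ V₁ V₂ *ᵥ 1 = 0 := by
    rw [Gbar, Matrix.add_mulVec, ← Matrix.mulVec_mulVec, centering_mulVec_one, Matrix.mulVec_zero,
      Rmat, Matrix.smul_mulVec, Matrix.vecMulVec_mulVec]
    simp [dotProduct_one, sum_vref hn]
  simp only [funext_iff, Matrix.mulVec, dotProduct, Pi.one_apply, mul_one, Pi.zero_apply] at hG
  simp [hG]

lemma Bbar_eq_Gbar_sub_smul_centering (hn : n = n₁ + n₂) (h2 : 2 ≤ n) :
    Bbar n n₁ n₂ p γ V₁ V₂ =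
      Gbar n n₁ n₂ p γ V₁ V₂ - (trace (Gbar n n₁ n₂ p γ V₁ V₂) / (n - 1)) • centering n := by
  have h2' : (2 : ℝ) ≤ n := by exact_mod_cast h2
  have hn₀ : (n : ℝ) ≠ 0 := by linarith
  have hn₁ : (n : ℝ) - 1 ≠ 0 := by linarith
  ext i j
  rw [Bbar, lambar, taubar, sum_Gbar_eq_zero hn]
  by_cases hij : i = j
  · simp [hij, centering, En]
    field_simp
  · simp [hij, centering, En]
    field_simp
    ring

lemma Bbar_sub_Rmat_eq (hn : n = n₁ + n₂) (h2 : 2 ≤ n) :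
    Bbar n n₁ n₂ p γ V₁ V₂ - Rmat n n₁ n₂ p γ = centering n *
      (Dmat n n₁ V₁ V₂ - (trace (Gbar n n₁ n₂ p γ V₁ V₂) / (n - 1)) • 1) * centering n := by
  rw [Bbar_eq_Gbar_sub_smul_centering hn h2, mul_sub, sub_mul, mul_smul_comm, smul_mul_assoc,
    mul_one, centering_mul_self, Gbar]
  abel

lemma vref_dotProduct_self (hn : n = n₁ + n₂) : vref n n₁ n₂ ⬝ᵥ vref n n₁ n₂ = n₁ * n₂ / n := by
  subst hn
  have hsq (j : Fin (n₁ + n₂)) : vref _ n₁ n₂ j * vref _ n₁ n₂ j =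
      if (j : ℕ) < n₁ then ((n₂ : ℝ) / (n₁ + n₂ : ℕ)) ^ 2 else ((n₁ : ℝ) / (n₁ + n₂ : ℕ)) ^ 2 := by
    unfold vref; split_ifs <;> ring
  rw [dotProduct, Finset.sum_congr rfl fun j _ => hsq j, sum_fin_add_ite_lt]
  rcases Nat.eq_zero_or_pos (n₁ + n₂) with h | h
  · simp [h]
  · field_simp; push_cast; ring

lemma trace_Gbar (hn : n = n₁ + n₂) :
    trace (Gbar n n₁ n₂ p γ V₁ V₂) =
      (1 - (n : ℝ)⁻¹) * (n₁ * V₁ + n₂ * V₂) + p * γ * (n₁ * n₂ / n) := by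
  have hCDC : trace (centering n * Dmat n n₁ V₁ V₂ * centering n) =
      trace (centering n * Dmat n n₁ V₁ V₂) := by
    rw [trace_mul_cycle, centering_mul_self]
  rw [Gbar, trace_add, hCDC, Rmat, trace_smul, trace_vecMulVec, vref_dotProduct_self hn]
  subst hn
  simp [trace, centering, Dmat, En, sum_fin_add_ite_lt]
  ring

lemma abs_sub_weighted_mean_le {a b : ℝ} (ha : 0 ≤ a) (hb : 0 ≤ b) (hab : 0 < a + b) (x y : ℝ) :
    |x - (a * x + b * y) / (a + b)| ≤ |x - y| := by
  have h : x - (a * x + b * y) / (a + b) = b / (a + b) * (x - y) := by field_simp; ring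
  rw [h, abs_mul, abs_of_nonneg (by positivity)]
  exact mul_le_of_le_one_left (abs_nonneg _) ((div_le_one hab).2 (by linarith))

lemma mul_div_mul_sub_one_le_one_third (hn : n = n₁ + n₂) (h4 : 4 ≤ n) :
    (n₁ * n₂ : ℝ) / (n * (n - 1)) ≤ 1 / 3 := by
  have h4' : (4 : ℝ) ≤ n := by exact_mod_cast h4
  have hn' : (n : ℝ) = n₁ + n₂ := by exact_mod_cast hn
  rw [div_le_iff₀ (by nlinarith)]
  nlinarith [sq_nonneg ((n₁ : ℝ) - n₂)]

lemma norm_Dmat_sub_smul_one_le (hn : n = n₁ + n₂) (h4 : 4 ≤ n) (hγ : 0 ≤ γ) :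
    ‖Dmat n n₁ V₁ V₂ - (trace (Gbar n n₁ n₂ p γ V₁ V₂) / (n - 1)) • 1‖ ≤
      |V₁ - V₂| + p * γ / 3 := by
  have h4' : (4 : ℝ) ≤ n := by exact_mod_cast h4
  have hn' : (n : ℝ) = n₁ + n₂ := by exact_mod_cast hn
  set m := (n₁ * V₁ + n₂ * V₂) / (n₁ + n₂ : ℝ)
  set t := p * γ * ((n₁ * n₂ : ℝ) / (n * (n - 1)))
  have hc : trace (Gbar n n₁ n₂ p γ V₁ V₂) / (n - 1) = m + t := by
    have hn₀ : (n₁ + n₂ : ℝ) ≠ 0 := by linarith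
    have hn₁ : (n₁ + n₂ - 1 : ℝ) ≠ 0 := by linarith
    simp only [trace_Gbar hn, m, t, hn']
    field_simp
  have ht₀ : 0 ≤ t := by
    have : (0 : ℝ) ≤ n - 1 := by linarith
    positivity
  have ht : t ≤ p * γ / 3 := by
    have := mul_le_mul_of_nonneg_left (mul_div_mul_sub_one_le_one_third hn h4)
      (by positivity : (0 : ℝ) ≤ p * γ)
    linarith
  have hpos : (0 : ℝ) < n₁ + n₂ := by linarith
  have hm₁ : |V₁ - m| ≤ |V₁ - V₂| := abs_sub_weighted_mean_le (by positivity) (by positivity) hpos _ _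
  have hm₂ : |V₂ - m| ≤ |V₁ - V₂| := by
    rw [abs_sub_comm V₁, show m = (n₂ * V₂ + n₁ * V₁) / (n₂ + n₁ : ℝ) by simp only [m]; ring_nf]
    exact abs_sub_weighted_mean_le (by positivity) (by positivity) (by linarith) _ _
  have hdev (x : ℝ) (hx : |x - m| ≤ |V₁ - V₂|) : |x - (m + t)| ≤ |V₁ - V₂| + p * γ / 3 := by
    calc |x - (m + t)| = |(x - m) - t| := by ring_nf
      _ ≤ |x - m| + |t| := abs_sub _ _
      _ ≤ |V₁ - V₂| + p * γ / 3 := by rw [abs_of_nonneg ht₀]; linarith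
  rw [hc, Dmat, smul_one_eq_diagonal, diagonal_sub, l2_opNorm_diagonal,
    pi_norm_le_iff_of_nonneg (by positivity)]
  intro j
  rw [Real.norm_eq_abs]
  split_ifs
  · exact hdev V₁ hm₁
  · exact hdev V₂ hm₂

end TwoGroups

theorem bias_opNorm_bound_general (n n₁ n₂ p : ℕ) (γ V₁ V₂ ξ : ℝ)
    (hn : n = n₁ + n₂) (hγ : 0 < γ)
    (hn4 : 4 ≤ n)
    (hA2 : |V₁ - V₂| ≤ ξ * n * p * γ / 3)
    (hξ : (1 / (2 * (n : ℝ))) * max 4 (1 / wmin n n₁ n₂) ≤ ξ) :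
    opNorm (Bbar n n₁ n₂ p γ V₁ V₂ - Rmat n n₁ n₂ p γ) ≤ (2 / 3) * ξ * n * p * γ ∧
    (V₁ = V₂ →
      opNorm (Bbar n n₁ n₂ p γ V₁ V₂ - Rmat n n₁ n₂ p γ) ≤ (p : ℝ) * γ / 3) := by
  have key : opNorm (Bbar n n₁ n₂ p γ V₁ V₂ - Rmat n n₁ n₂ p γ) ≤ |V₁ - V₂| + p * γ / 3 := by
    rw [opNorm_eq_l2_opNorm, Bbar_sub_Rmat_eq hn (by omega)]
    exact ((isStarProjection_centering n).norm_mul_mul_self_le _).trans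
      (norm_Dmat_sub_smul_one_le hn hn4 hγ.le)
  have hξn : 2 ≤ ξ * n := by
    have h := (mul_le_mul_of_nonneg_left (le_max_left 4 (1 / wmin n n₁ n₂))
      (by positivity : (0 : ℝ) ≤ 1 / (2 * n))).trans hξ
    rw [div_mul_eq_mul_div, one_mul, div_le_iff₀ (by positivity)] at h
    linarith
  have hpγ : 0 ≤ (p : ℝ) * γ := by positivity
  refine ⟨key.trans ?_, fun hV => by simpa [hV] using key⟩
  nlinarith

/-- operator-norm bound on the bias `B̄ - R` under (A2). -/
theorem bias_opNorm_bound (n n₁ n₂ p : ℕ) (γ V₁ V₂ ξ : ℝ)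
    (hn : n = n₁ + n₂) (hn₁ : 0 < n₁) (hn₂ : 0 < n₂) (hp : 1 ≤ p) (hγ : 0 < γ)
    (hn4 : 4 ≤ n)
    (hA2 : |V₁ - V₂| ≤ ξ * n * p * γ / 3)
    (hξ : (1 / (2 * (n : ℝ))) * max 4 (1 / wmin n n₁ n₂) ≤ ξ) :
    opNorm (Bbar n n₁ n₂ p γ V₁ V₂ - Rmat n n₁ n₂ p γ) ≤ (2 / 3) * ξ * n * p * γ ∧
    (V₁ = V₂ →
      opNorm (Bbar n n₁ n₂ p γ V₁ V₂ - Rmat n n₁ n₂ p γ) ≤ (p : ℝ) * γ / 3) :=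
  bias_opNorm_bound_general n n₁ n₂ p γ V₁ V₂ ξ hn hγ hn4 hA2 hξ

end
end
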